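/- Let M be an invertible m×m matrix over F₂ and let G = T₂ ⊗ M (so G has block form ((M,0),(M,M)), with rows 0,…,m−1 forming the upper half and rows m,…,2m−1 the lower half). Let I ⊆ {0,…,2m−1} be nonempty, let a = |I ∩ {0,…,m−1}| and b = |I ∩ {m,…,2m−1}|. Then: if a ≥ 1 then d_G(I) ≤ S_M(a), and if b ≥ 1 then d_G(I) ≤ 2·S_M(b). -/

import Mathlib

open Matrix

noncomputable section

abbrev F2 : Type := ZMod 2

/-- The Arikan kernel `T₂ = ((1,0),(1,1))` over `F₂`. -/
def T2 : Matrix (Fin 2) (Fin 2) F2 := !![1, 0; 1, 1]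

/-- Kronecker product of `Fin`-indexed square matrices, with the standard index
convention `(A ⊗ B) i j = A (i / n) (j / n) * B (i % n) (j % n)`. -/
def kron {m n : ℕ} (A : Matrix (Fin m) (Fin m) F2) (B : Matrix (Fin n) (Fin n) F2) :
    Matrix (Fin (m * n)) (Fin (m * n)) F2 :=
  fun i j => A i.divNat j.divNat * B i.modNat j.modNat

/-- The `n`-fold Kronecker power of `T₂` (with `T₂^{⊗0}` the 1×1 identity). -/
def T2pow : (n : ℕ) → Matrix (Fin (2 ^ n)) (Fin (2 ^ n)) F2
  | 0 => 1
  | n + 1 => (kron T2 (T2pow n)).submatrix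
      (Fin.cast (by rw [pow_succ, Nat.mul_comm]))
      (Fin.cast (by rw [pow_succ, Nat.mul_comm]))

/-- Minimum distance `d_G(I)`: the minimum Hamming weight of `u · G` over all
nonzero row vectors `u` with support contained in `I`. -/
def minDist {N : ℕ} (G : Matrix (Fin N) (Fin N) F2) (I : Finset (Fin N)) : ℕ :=
  sInf {w | ∃ u : Fin N → F2, u ≠ 0 ∧ (∀ i, u i ≠ 0 → i ∈ I) ∧
    hammingNorm (Matrix.vecMul u G) = w}

/-- Minimum-distance spectrum `S_G(K)`: the maximum of `d_G(I)` over all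
row-index sets `I` of size `K`. -/
def spec {N : ℕ} (G : Matrix (Fin N) (Fin N) F2) (K : ℕ) : ℕ :=
  sSup {d | ∃ I : Finset (Fin N), I.card = K ∧ minDist G I = d}

/-- `K`-th largest element (1-indexed, counted with multiplicity) of a
multiset of natural numbers. -/
def kthLargest (s : Multiset ℕ) (K : ℕ) : ℕ :=
  ((s.sort (· ≤ ·)).reverse).getD (K - 1) 0

/-!
A message `u` of `M` placed in block row `d` of `T₂ ⊗ M` is encoded as `T₂ d ⊗ (u M)`, a codeword
of weight `wt (T₂ d) · wt (u M)`. Taking for `u` a minimum-weight message of `M` supported on the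
row positions of `I` in block row `d` gives `d_G(I) ≤ wt (T₂ d) · S_M(|I ∩ block d|)`; the rows
of `T₂` have weights `1` and `2`.
-/

open Finset

namespace Fin

variable {a n : ℕ}

@[simp]
lemma divNat_finProdFinEquiv (x : Fin a × Fin n) : (finProdFinEquiv x).divNat = x.1 := by
  simpa using (congrArg Prod.fst (finProdFinEquiv_symm_apply (finProdFinEquiv x))).symm

@[simp]
lemma modNat_finProdFinEquiv (x : Fin a × Fin n) : (finProdFinEquiv x).modNat = x.2 := by
  simpa using (congrArg Prod.snd (finProdFinEquiv_symm_apply (finProdFinEquiv x))).symm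

lemma ext_divNat_modNat {i j : Fin (a * n)} (hdiv : i.divNat = j.divNat)
    (hmod : i.modNat = j.modNat) : i = j :=
  finProdFinEquiv.symm.injective <| by simp [finProdFinEquiv_symm_apply, hdiv, hmod]

end Fin

lemma hammingNorm_comp_equiv {ι κ β : Type*} [Fintype ι] [Fintype κ] [Zero β] [DecidableEq β]
    (e : ι ≃ κ) (f : κ → β) : hammingNorm (f ∘ e) = hammingNorm f :=
  card_equiv e (by simp)

lemma hammingNorm_mul_divNat_modNat {R : Type*} [MulZeroClass R] [NoZeroDivisors R]
    [DecidableEq R] {a n : ℕ} (c : Fin a → R) (w : Fin n → R) :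
    hammingNorm (fun j : Fin (a * n) => c j.divNat * w j.modNat)
      = hammingNorm c * hammingNorm w := by
  rw [← hammingNorm_comp_equiv finProdFinEquiv, hammingNorm, hammingNorm, hammingNorm,
    ← card_product, ← filter_product, univ_product_univ]
  congr 1
  ext x
  simp

section Kronecker

variable {a n : ℕ} (A : Matrix (Fin a) (Fin a) F2) (B : Matrix (Fin n) (Fin n) F2)

@[simp]
lemma kron_finProdFinEquiv (p q : Fin a) (x y : Fin n) :
    kron A B (finProdFinEquiv (p, x)) (finProdFinEquiv (q, y)) = A p q * B x y := by
  simp [kron]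

lemma vecMul_kron_of_block (d : Fin a) (u : Fin n → F2) :
    vecMul (fun i : Fin (a * n) => if i.divNat = d then u i.modNat else 0) (kron A B)
      = fun j => A d j.divNat * vecMul u B j.modNat := by
  funext j
  rw [← finProdFinEquiv.apply_symm_apply j, finProdFinEquiv_symm_apply]
  simp only [vecMul, dotProduct, ← finProdFinEquiv.sum_comp, Fintype.sum_prod_type_right,
    kron_finProdFinEquiv, Fin.divNat_finProdFinEquiv, Fin.modNat_finProdFinEquiv, ite_mul,
    zero_mul, sum_ite_eq', mem_univ, if_true, mul_sum]
  exact sum_congr rfl fun x _ => by ring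

end Kronecker

section MinDist

variable {N : ℕ} (G : Matrix (Fin N) (Fin N) F2)

lemma minDist_le_hammingNorm {I : Finset (Fin N)} {u : Fin N → F2} (hu : u ≠ 0)
    (huI : ∀ i, u i ≠ 0 → i ∈ I) : minDist G I ≤ hammingNorm (vecMul u G) :=
  Nat.sInf_le ⟨u, hu, huI, rfl⟩

lemma exists_hammingNorm_eq_minDist {I : Finset (Fin N)} (hI : I.Nonempty) :
    ∃ u : Fin N → F2, u ≠ 0 ∧ (∀ i, u i ≠ 0 → i ∈ I) ∧ hammingNorm (vecMul u G) = minDist G I := by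
  obtain ⟨i, hi⟩ := hI
  have hsingle : ∀ j, (Pi.single i 1 : Fin N → F2) j ≠ 0 → j ∈ I := fun j hj => by
    obtain rfl : j = i := by_contra fun hji => by simp [hji] at hj
    exact hi
  exact Nat.sInf_mem (s := {w | ∃ u : Fin N → F2, u ≠ 0 ∧ (∀ i, u i ≠ 0 → i ∈ I) ∧
    hammingNorm (vecMul u G) = w}) ⟨_, _, by simp, hsingle, rfl⟩

@[simp]
lemma minDist_empty : minDist G ∅ = 0 :=
  Nat.sInf_eq_zero.2 <| .inr <| Set.eq_empty_of_forall_notMem fun _ ⟨_, hu, huI, _⟩ =>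
    hu <| funext fun i => of_not_not fun hi => notMem_empty i (huI i hi)

lemma minDist_le_card (I : Finset (Fin N)) : minDist G I ≤ N := by
  obtain rfl | hI := I.eq_empty_or_nonempty
  · simp
  · obtain ⟨u, -, -, hu⟩ := exists_hammingNorm_eq_minDist G hI
    exact hu ▸ hammingNorm_le_card_fintype.trans_eq (Fintype.card_fin N)

lemma minDist_le_spec (I : Finset (Fin N)) : minDist G I ≤ spec G I.card :=
  le_csSup ⟨N, by rintro _ ⟨J, -, rfl⟩; exact minDist_le_card G J⟩ ⟨I, rfl, rfl⟩

end MinDist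

lemma minDist_kron_le_hammingNorm_mul_spec {a n : ℕ} (A : Matrix (Fin a) (Fin a) F2)
    (B : Matrix (Fin n) (Fin n) F2) (I : Finset (Fin (a * n))) (d : Fin a)
    (hId : (I.filter (·.divNat = d)).Nonempty) :
    minDist (kron A B) I ≤ hammingNorm (A d) * spec B (I.filter (·.divNat = d)).card := by
  set J := (I.filter (·.divNat = d)).image Fin.modNat
  have hJcard : J.card = (I.filter (·.divNat = d)).card := by
    refine card_image_of_injOn fun i hi j hj hij => Fin.ext_divNat_modNat ?_ hij
    exact (mem_filter.1 hi).2.trans (mem_filter.1 hj).2.symm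
  obtain ⟨u, hu, huJ, hwt⟩ := exists_hammingNorm_eq_minDist B (hId.image _)
  set v : Fin (a * n) → F2 := fun i => if i.divNat = d then u i.modNat else 0
  have hv : v ≠ 0 := by
    obtain ⟨x, hx⟩ := Function.ne_iff.1 hu
    exact Function.ne_iff.2 ⟨finProdFinEquiv (d, x), by simpa [v] using hx⟩
  have hvI : ∀ i, v i ≠ 0 → i ∈ I := by
    intro i hi
    by_cases hd : i.divNat = d
    · obtain ⟨j, hj, hji⟩ := mem_image.1 (huJ _ (by simpa [v, hd] using hi))
      rw [← Fin.ext_divNat_modNat ((mem_filter.1 hj).2.trans hd.symm) hji]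
      exact (mem_filter.1 hj).1
    · simp [v, hd] at hi
  calc minDist (kron A B) I ≤ hammingNorm (vecMul v (kron A B)) := minDist_le_hammingNorm _ hv hvI
    _ = hammingNorm (A d) * minDist B J := by
      rw [vecMul_kron_of_block, hammingNorm_mul_divNat_modNat, hwt]
    _ ≤ hammingNorm (A d) * spec B J.card := Nat.mul_le_mul_left _ (minDist_le_spec B J)
    _ = hammingNorm (A d) * spec B (I.filter (·.divNat = d)).card := by rw [hJcard]

theorem minDist_kron_T2_upper_bounds_general
    (m : ℕ) (M : Matrix (Fin m) (Fin m) F2)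
    (I : Finset (Fin (2 * m))) :
    (1 ≤ (I.filter (fun i : Fin (2 * m) => (i : ℕ) < m)).card →
      minDist (kron T2 M) I ≤ spec M (I.filter (fun i : Fin (2 * m) => (i : ℕ) < m)).card) ∧
    (1 ≤ (I.filter (fun i : Fin (2 * m) => m ≤ (i : ℕ))).card →
      minDist (kron T2 M) I ≤ 2 * spec M (I.filter (fun i : Fin (2 * m) => m ≤ (i : ℕ))).card) := by
  have hm (i : Fin (2 * m)) : 0 < m := by have := i.isLt; omega
  have upper : I.filter (fun i : Fin (2 * m) => (i : ℕ) < m) = I.filter (·.divNat = 0) :=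
    filter_congr fun i _ => by
      rw [Fin.ext_iff, Fin.coe_divNat, Nat.div_eq_iff (hm i)]
      simp only [Fin.val_zero]
      omega
  have lower : I.filter (fun i : Fin (2 * m) => m ≤ (i : ℕ)) = I.filter (·.divNat = 1) :=
    filter_congr fun i _ => by
      rw [Fin.ext_iff, Fin.coe_divNat, Nat.div_eq_iff (hm i)]
      have := i.isLt
      simp only [Fin.val_one]
      omega
  have hT0 : hammingNorm (T2 0) = 1 := by decide
  have hT1 : hammingNorm (T2 1) = 2 := by decide
  rw [upper, lower]
  refine ⟨fun h => ?_, fun h => ?_⟩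
  · simpa only [hT0, one_mul] using minDist_kron_le_hammingNorm_mul_spec T2 M I 0 (card_pos.1 h)
  · simpa only [hT1] using minDist_kron_le_hammingNorm_mul_spec T2 M I 1 (card_pos.1 h)

theorem minDist_kron_T2_upper_bounds
    (m : ℕ) (M : Matrix (Fin m) (Fin m) F2) (hM : IsUnit M)
    (I : Finset (Fin (2 * m))) (hI : I.Nonempty) :
    (1 ≤ (I.filter (fun i : Fin (2 * m) => (i : ℕ) < m)).card →
      minDist (kron T2 M) I ≤ spec M (I.filter (fun i : Fin (2 * m) => (i : ℕ) < m)).card) ∧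
    (1 ≤ (I.filter (fun i : Fin (2 * m) => m ≤ (i : ℕ))).card →
      minDist (kron T2 M) I ≤ 2 * spec M (I.filter (fun i : Fin (2 * m) => m ≤ (i : ℕ))).card) :=
  minDist_kron_T2_upper_bounds_general m M I
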